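/- Let d be an odd positive integer, ω = exp(−2πi/d), X, Z the shift and clock matrices on ℂ^d, and 2⁻¹ = (d+1)/2 the inverse of 2 mod d. Let ρ ∈ M_d(ℂ) be Hermitian with characteristic function φ_ρ(j,l) = Tr(ρ · ω^{2⁻¹ jl} X^j Z^l) for (j,l) ∈ ℤ_d × ℤ_d. Then ρ is positive semidefinite if and only if the d²×d² matrix M^Q, indexed by ℤ_d × ℤ_d and with entries M^Q_{(j,l),(j',l')} = φ_ρ(j'−j, l'−l) · ω^{2⁻¹ (j l' − j' l)}, is positive semidefinite. -/

import Mathlib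

open Finset Matrix ComplexConjugate
open scoped ComplexOrder

noncomputable def omega (d : ℕ) : ℂ := Complex.exp (-(2 * Real.pi * Complex.I) / d)

def shift (d : ℕ) : Matrix (ZMod d) (ZMod d) ℂ :=
  Matrix.of fun m k => if m = k + 1 then 1 else 0

noncomputable def clock (d : ℕ) : Matrix (ZMod d) (ZMod d) ℂ :=
  Matrix.diagonal fun k => omega d ^ k.val

/-!
Write `W p = ω^{2⁻¹ p₁ p₂} X^{p₁} Z^{p₂}` for the Weyl operators. Since
`(W p)ᴴ W q = ω^{2⁻¹ (p₁ q₂ - q₁ p₂)} W (q - p)`, the entry of `M^Q` at `(p, q)` is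
`Tr(ρ (W p)ᴴ W q)`, so `xᴴ M^Q x = Tr(A ρ Aᴴ)` with `A = ∑ x_q W q`. This is nonnegative when
`ρ ≥ 0`. Conversely, the `d²` Weyl operators are orthogonal for the trace form, hence span
`M_d(ℂ)`; choosing `A = e_i vᴴ` gives `vᴴ ρ v ≥ 0`.
-/

namespace Matrix

variable {ι n R : Type*} [Fintype n] [CommRing R] [StarRing R]

def traceGram (ρ : Matrix n n R) (D : ι → Matrix n n R) : Matrix ι ι R :=
  of fun p q => (ρ * ((D p)ᴴ * D q)).trace

@[simp]
lemma traceGram_apply (ρ : Matrix n n R) (D : ι → Matrix n n R) (p q : ι) :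
    ρ.traceGram D p q = (ρ * ((D p)ᴴ * D q)).trace :=
  rfl

lemma IsHermitian.traceGram {ρ : Matrix n n R} (hρ : ρ.IsHermitian) (D : ι → Matrix n n R) :
    (ρ.traceGram D).IsHermitian := by
  ext p q
  simp only [conjTranspose_apply, traceGram_apply]
  rw [← trace_conjTranspose, conjTranspose_mul, conjTranspose_mul, conjTranspose_conjTranspose,
    hρ.eq, trace_mul_comm]

lemma star_dotProduct_traceGram_mulVec [Fintype ι] (ρ : Matrix n n R) (D : ι → Matrix n n R)
    (x : ι → R) :
    star x ⬝ᵥ (ρ.traceGram D *ᵥ x) = ((∑ q, x q • D q) * ρ * (∑ q, x q • D q)ᴴ).trace := by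
  rw [trace_mul_cycle, trace_mul_comm, conjTranspose_sum, sum_mul_sum]
  simp only [dotProduct, mulVec, traceGram_apply, mul_sum, conjTranspose_smul,
    smul_mul_smul_comm, Matrix.mul_smul, trace_sum, trace_smul, smul_eq_mul, Pi.star_apply]
  exact sum_congr rfl fun p _ => sum_congr rfl fun q _ => by ring

lemma trace_vecMulVec_single_mul_mul_conjTranspose [DecidableEq n] (ρ : Matrix n n R) (i : n)
    (v : n → R) :
    (vecMulVec (Pi.single i 1) (star v) * ρ * (vecMulVec (Pi.single i 1) (star v))ᴴ).trace =
      star v ⬝ᵥ (ρ *ᵥ v) := by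
  rw [trace_mul_cycle, conjTranspose_vecMulVec, vecMulVec_mul_vecMulVec, star_star]
  simp [trace_mul_comm _ ρ, mul_vecMulVec, trace_vecMulVec, dotProduct_comm]

lemma linearIndependent_of_trace_conjTranspose_mul {K : Type*} [Fintype ι] [DecidableEq ι]
    [Field K] [StarRing K] {D : ι → Matrix n n K} {c : K} (hc : c ≠ 0)
    (hD : ∀ p q, ((D p)ᴴ * D q).trace = if p = q then c else 0) :
    LinearIndependent K D := by
  refine Fintype.linearIndependent_iff.mpr fun g hg p => ?_
  have h := congrArg (fun A => ((D p)ᴴ * A).trace) hg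
  simp only [Matrix.mul_sum, Matrix.mul_smul, trace_sum, trace_smul, hD, smul_eq_mul, mul_ite,
    mul_zero, sum_ite_eq, mem_univ, if_true, trace_zero] at h
  exact (mul_eq_zero.mp h).resolve_right hc

variable [PartialOrder R]

lemma PosSemidef.of_trace_mul_mul_conjTranspose_nonneg {ρ : Matrix n n R} (hρ : ρ.IsHermitian)
    (h : ∀ A : Matrix n n R, 0 ≤ (A * ρ * Aᴴ).trace) : ρ.PosSemidef := by
  classical
  refine .of_dotProduct_mulVec_nonneg hρ fun v => ?_
  cases isEmpty_or_nonempty n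
  · simp [dotProduct]
  · rw [← trace_vecMulVec_single_mul_mul_conjTranspose ρ (Classical.arbitrary n)]
    exact h _

lemma PosSemidef.traceGram [Fintype ι] [AddLeftMono R] {ρ : Matrix n n R} (hρ : ρ.PosSemidef)
    (D : ι → Matrix n n R) : (ρ.traceGram D).PosSemidef :=
  .of_dotProduct_mulVec_nonneg (hρ.isHermitian.traceGram D) fun x => by
    rw [star_dotProduct_traceGram_mulVec]
    exact (hρ.mul_mul_conjTranspose_same _).trace_nonneg

lemma PosSemidef.of_traceGram [Fintype ι] {ρ : Matrix n n R} (hρ : ρ.IsHermitian)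
    {D : ι → Matrix n n R} (hD : Submodule.span R (Set.range D) = ⊤)
    (h : (ρ.traceGram D).PosSemidef) : ρ.PosSemidef := by
  refine .of_trace_mul_mul_conjTranspose_nonneg hρ fun A => ?_
  have hA : A ∈ Submodule.span R (Set.range D) := hD ▸ Submodule.mem_top
  obtain ⟨x, rfl⟩ := (Submodule.mem_span_range_iff_exists_fun R).mp hA
  rw [← star_dotProduct_traceGram_mulVec]
  exact h.dotProduct_mulVec_nonneg x

theorem posSemidef_iff_traceGram_posSemidef [Fintype ι] [AddLeftMono R] {ρ : Matrix n n R}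
    (hρ : ρ.IsHermitian) {D : ι → Matrix n n R} (hD : Submodule.span R (Set.range D) = ⊤) :
    ρ.PosSemidef ↔ (ρ.traceGram D).PosSemidef :=
  ⟨fun h => h.traceGram D, PosSemidef.of_traceGram hρ hD⟩

end Matrix

section Weyl

noncomputable def omegaChar (d : ℕ) [NeZero d] : AddChar (ZMod d) ℂ := ZMod.stdAddChar⁻¹

def half (d : ℕ) : ZMod d := ((d + 1) / 2 : ℕ)

noncomputable def weyl (d : ℕ) [NeZero d] (p : ZMod d × ZMod d) : Matrix (ZMod d) (ZMod d) ℂ :=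
  of fun m k => if m = k + p.1 then omegaChar d (half d * p.1 * p.2 + p.2 * k) else 0

variable {d : ℕ}

lemma two_mul_half (hd : Odd d) : 2 * half d = 1 := by
  obtain ⟨k, rfl⟩ := hd
  rw [half, show (2 * k + 1 + 1) / 2 = k + 1 by omega]
  have h : ((2 * k + 1 : ℕ) : ZMod (2 * k + 1)) = 0 := ZMod.natCast_self _
  push_cast at h ⊢
  linear_combination h

variable [NeZero d]

lemma omega_pow_val (a : ZMod d) : omega d ^ a.val = omegaChar d a := by
  rw [omegaChar, AddChar.inv_apply', ZMod.stdAddChar_apply, ZMod.toCircle_apply, omega,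
    ← Complex.exp_nat_mul, ← Complex.exp_neg]
  ring_nf

lemma sum_omegaChar_mul (t : ZMod d) :
    ∑ l : ZMod d, omegaChar d (l * t) = if t = 0 then (d : ℂ) else 0 := by
  simp only [omegaChar, AddChar.inv_apply, ← mul_neg]
  rw [AddChar.sum_mulShift _ (ZMod.isPrimitive_stdAddChar d)]
  simp [ZMod.card]

lemma star_omegaChar (a : ZMod d) : star (omegaChar d a) = omegaChar d (-a) := by
  rw [← AddChar.inv_apply,
    ← AddChar.starComp_apply (by rw [ZMod.ringChar_zmod_n]; exact NeZero.pos d)]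
  rfl

lemma shift_pow_apply (n : ℕ) (m k : ZMod d) :
    (shift d ^ n) m k = if m = k + n then 1 else 0 := by
  induction n generalizing k with
  | zero => simp [one_apply]
  | succ n ih =>
    simp_rw [pow_succ, mul_apply, ih]
    simp only [shift, of_apply, mul_ite, mul_one, mul_zero, sum_ite_eq', mem_univ, if_true,
      Nat.cast_succ, add_assoc, add_comm (1 : ZMod d)]

lemma clock_pow (n : ℕ) : clock d ^ n = diagonal fun k => omegaChar d (n * k) := by
  rw [clock, diagonal_pow]
  congr 1
  ext k
  simp only [Pi.pow_apply, omega_pow_val, ← AddChar.map_nsmul_eq_pow, nsmul_eq_mul]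

lemma weyl_eq (p : ZMod d × ZMod d) :
    weyl d p = omega d ^ (half d * p.1 * p.2).val • (shift d ^ p.1.val * clock d ^ p.2.val) := by
  ext m k
  rw [Matrix.smul_apply, clock_pow, mul_diagonal, shift_pow_apply, omega_pow_val, weyl, of_apply,
    ZMod.natCast_zmod_val, ZMod.natCast_zmod_val]
  split_ifs <;> simp [AddChar.map_add_eq_mul]

lemma conjTranspose_weyl_mul_weyl (hd : Odd d) (p q : ZMod d × ZMod d) :
    (weyl d p)ᴴ * weyl d q = omegaChar d (half d * (p.1 * q.2 - q.1 * p.2)) • weyl d (q - p) := by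
  ext m k
  simp only [mul_apply, conjTranspose_apply, weyl, of_apply, apply_ite star, star_zero,
    star_omegaChar, mul_ite, mul_zero, sum_ite_eq', mem_univ, if_true, Matrix.smul_apply,
    smul_eq_mul, Prod.fst_sub, Prod.snd_sub]
  have hmk : k + q.1 = m + p.1 ↔ m = k + (q.1 - p.1) := by
    constructor <;> intro h <;> linear_combination -h
  simp only [ite_mul, zero_mul, hmk]
  split_ifs with h
  · rw [← AddChar.map_add_eq_mul, ← AddChar.map_add_eq_mul, h]
    congr 1
    linear_combination (q.1 * p.2 - p.1 * p.2) * two_mul_half hd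
  · rfl

lemma trace_weyl (p : ZMod d × ZMod d) : (weyl d p).trace = if p = 0 then (d : ℂ) else 0 := by
  obtain ⟨j, l⟩ := p
  by_cases hj : j = 0
  · subst hj
    simp only [trace, diag_apply, weyl, of_apply, add_zero, if_true, mul_zero, zero_mul,
      zero_add, Prod.ext_iff, Prod.fst_zero, Prod.snd_zero, true_and, mul_comm l]
    exact sum_omegaChar_mul l
  · have hk : ∀ k : ZMod d, ¬ k = k + j := fun k h => hj (by simpa using h)
    simp [trace, weyl, hk, hj]

lemma trace_conjTranspose_weyl_mul_weyl (hd : Odd d) (p q : ZMod d × ZMod d) :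
    ((weyl d p)ᴴ * weyl d q).trace = if p = q then (d : ℂ) else 0 := by
  rw [conjTranspose_weyl_mul_weyl hd, trace_smul, trace_weyl]
  by_cases h : p = q
  · simp [h, mul_comm q.1]
  · simp [sub_eq_zero, Ne.symm h, h]

lemma span_weyl (hd : Odd d) : Submodule.span ℂ (Set.range (weyl d)) = ⊤ := by
  refine (linearIndependent_of_trace_conjTranspose_mul (NeZero.ne (d : ℂ))
    (trace_conjTranspose_weyl_mul_weyl hd)).span_eq_top_of_card_eq_finrank' ?_
  simp [Module.finrank_matrix]

end Weyl

/-- **Quantum Bochner's theorem for the discrete Wigner function, quantum part.**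
For odd `d` and Hermitian `ρ` with characteristic function
`φ_ρ(j,l) = Tr(ρ ω^{2⁻¹ jl} X^j Z^l)`, `ρ` is positive semidefinite iff the `d²×d²` matrix
`M^Q_{(j,l),(j',l')} = φ_ρ(j'−j, l'−l) ω^{2⁻¹ (jl' − j'l)}` is positive semidefinite. -/
theorem posSemidef_iff_MQ_posSemidef (d : ℕ) [NeZero d] (hd : Odd d)
    (ρ : Matrix (ZMod d) (ZMod d) ℂ) (hρ : ρ.IsHermitian)
    (φ : ZMod d × ZMod d → ℂ)
    (hφ : ∀ p : ZMod d × ZMod d,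
      φ p = (ρ * (omega d ^ ((((d + 1) / 2 : ℕ) : ZMod d) * p.1 * p.2).val •
        (shift d ^ (p.1).val * clock d ^ (p.2).val))).trace) :
    ρ.PosSemidef ↔
      (Matrix.of fun p q : ZMod d × ZMod d =>
        φ (q - p) *
          omega d ^ ((((d + 1) / 2 : ℕ) : ZMod d) * (p.1 * q.2 - q.1 * p.2)).val).PosSemidef := by
  have hφW : ∀ r, φ r = (ρ * weyl d r).trace := fun r => by rw [hφ, weyl_eq]; rfl
  have hMQ : (Matrix.of fun p q : ZMod d × ZMod d =>
      φ (q - p) * omega d ^ ((((d + 1) / 2 : ℕ) : ZMod d) * (p.1 * q.2 - q.1 * p.2)).val) =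
      ρ.traceGram (weyl d) := by
    ext p q
    rw [of_apply, traceGram_apply, conjTranspose_weyl_mul_weyl hd, Matrix.mul_smul, trace_smul,
      smul_eq_mul, hφW, omega_pow_val, mul_comm]
    rfl
  rw [hMQ]
  exact posSemidef_iff_traceGram_posSemidef hρ (span_weyl hd)
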